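/- arXiv:2406.07105 — 3 statements merged into one kernel-verified Lean document; each statement's English description precedes it below -/
import Mathlib

section
/- Let g = [[0,1,0,0],[1,0,0,0],[0,0,0,-1],[0,0,-1,0]] and let K¹ be the covariant matrix with rows (0, λ₁, 0, 0), (λ₁, λ₀, 0, 0), (0, 0, λ₇, λ₂), (0, 0, λ₂, λ₇). Then for any λ₀ ≠ 0 the mixed tensor K¹ᵤ^ν = K¹ g⁻¹ is similar to the matrix diag-block consisting of a 2×2 Jordan block with eigenvalue λ₁ together with diag(-(λ₂+λ₇), -(λ₂-λ₇)). -/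
/-!
Both `K` and `g` are block diagonal with 2×2 blocks, hence so is `K g`. Its upper block
`[[l₁, 0], [l₀, l₁]]` is `l₁` plus a nonzero nilpotent, so `e₁ ↦ l₀ e₂ ↦ 0` under `K g - l₁` is a Jordan chain;
its lower block `-[[l₂, l₇], [l₇, l₂]]` has eigenvectors `e₃ ± e₄` with eigenvalues
`-(l₂ ± l₇)`. These four vectors form the change of basis, of determinant `2 l₀`.
-/

open Matrix

section

variable {R : Type*} [CommRing R]

def jordanBasis (l₀ : R) : Matrix (Fin 4) (Fin 4) R :=
  !![0, 1, 0, 0; l₀, 0, 0, 0; 0, 0, 1, 1; 0, 0, 1, -1]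

theorem det_jordanBasis (l₀ : R) : (jordanBasis l₀).det = 2 * l₀ := by
  simp [jordanBasis, det_succ_row_zero, Fin.sum_univ_succ, Fin.succAbove, ← two_mul, mul_comm l₀]

theorem covariant_mul_metric (l₀ l₁ l₂ l₇ : R) :
    !![0, l₁, 0, 0; l₁, l₀, 0, 0; 0, 0, l₇, l₂; 0, 0, l₂, l₇] *
        !![0, 1, 0, 0; 1, 0, 0, 0; 0, 0, 0, -1; 0, 0, -1, 0] =
      !![l₁, 0, 0, 0; l₀, l₁, 0, 0; 0, 0, -l₂, -l₇; 0, 0, -l₇, -l₂] := by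
  ext i j
  fin_cases i <;> fin_cases j <;> simp [mul_apply, Fin.sum_univ_four]

theorem mul_jordanBasis (l₀ l₁ l₂ l₇ : R) :
    !![l₁, 0, 0, 0; l₀, l₁, 0, 0; 0, 0, -l₂, -l₇; 0, 0, -l₇, -l₂] * jordanBasis l₀ =
      jordanBasis l₀ *
        !![l₁, 1, 0, 0; 0, l₁, 0, 0; 0, 0, -(l₂ + l₇), 0; 0, 0, 0, -(l₂ - l₇)] := by
  ext i j
  fin_cases i <;> fin_cases j <;>
    simp [jordanBasis, mul_apply, Fin.sum_univ_four, mul_comm, sub_eq_add_neg, add_comm]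

end

theorem stmt1 (l₀ l₁ l₂ l₇ : ℝ) (h0 : l₀ ≠ 0) :
    let g : Matrix (Fin 4) (Fin 4) ℝ := !![0,1,0,0; 1,0,0,0; 0,0,0,-1; 0,0,-1,0]
    let K : Matrix (Fin 4) (Fin 4) ℝ :=
      !![0, l₁, 0, 0; l₁, l₀, 0, 0; 0, 0, l₇, l₂; 0, 0, l₂, l₇]
    let J : Matrix (Fin 4) (Fin 4) ℝ :=
      !![l₁, 1, 0, 0; 0, l₁, 0, 0; 0, 0, -(l₂ + l₇), 0; 0, 0, 0, -(l₂ - l₇)]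
    ∃ P : Matrix (Fin 4) (Fin 4) ℝ, IsUnit P.det ∧ (K * g) * P = P * J := by
  intro g K J
  refine ⟨jordanBasis l₀, ?_, ?_⟩
  · rw [det_jordanBasis]
    exact (mul_ne_zero two_ne_zero h0).isUnit
  · rw [covariant_mul_metric, mul_jordanBasis]
end

section
/- In a real 4-dimensional inner-product space with symmetric bilinear form B of signature (+,-,-,-), suppose a linear map K is B-symmetric (B(Kx,y) = B(x,Ky) for all x,y). Then K cannot have two distinct pairs of non-real complex-conjugate eigenvalues; equivalently, K has at least two real eigenvalues (counted with multiplicity). -/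
/-
The signature of `B` enters only through a vector `e₀` whose `B`-orthogonal complement is
negative definite. If `K` has a non-real eigenvalue `α + iβ` with eigenvector `x + iy`, then
`W = span {x, y}` is a `K`-invariant plane on which `K` acts as a rotation-dilation, and
self-adjointness forces `B x x + B y y = 0`. A Lorentzian space contains no totally isotropic
plane, so `W` contains a timelike vector `e`. By the reverse Cauchy-Schwarz inequality `e^⊥` is
negative definite, hence `W ∩ W^⊥ = 0` and `K` restricts to a self-adjoint map of the definite
space `W^⊥`, of dimension at least two. A self-adjoint map of a definite space has only real
eigenvalues, so `W^⊥` contributes two real roots to the characteristic polynomial of `K`, and the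
remaining two roots of the quartic form a single conjugate pair.
-/

open Polynomial Matrix Module ComplexConjugate

namespace Polynomial

lemma exists_isRoot_of_forall_im_eq_zero {p : ℝ[X]} (hp : 0 < p.natDegree)
    (h : ∀ z : ℂ, aeval z p = 0 → z.im = 0) : ∃ r : ℝ, p.IsRoot r := by
  obtain ⟨z, hz⟩ := Complex.exists_root (f := p.map (algebraMap ℝ ℂ))
    (by rw [degree_map]; exact natDegree_pos_iff_degree_pos.mp hp)
  rw [IsRoot, eval_map_algebraMap] at hz
  have hzr : (z.re : ℂ) = z := Complex.ext rfl (by simp [h z hz])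
  refine ⟨z.re, ?_⟩
  rw [← hzr, ← Complex.coe_algebraMap, aeval_algebraMap_apply, map_eq_zero] at hz
  exact hz

lemma exists_mul_dvd_of_forall_im_eq_zero {p : ℝ[X]} (hp : 2 ≤ p.natDegree)
    (h : ∀ z : ℂ, aeval z p = 0 → z.im = 0) : ∃ r s : ℝ, (X - C r) * (X - C s) ∣ p := by
  obtain ⟨r, hr⟩ := exists_isRoot_of_forall_im_eq_zero (by omega) h
  obtain ⟨q, rfl⟩ := dvd_iff_isRoot.mpr hr
  have hq : q ≠ 0 := by rintro rfl; simp at hp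
  rw [natDegree_mul (X_sub_C_ne_zero r) hq, natDegree_X_sub_C] at hp
  obtain ⟨s, hs⟩ := exists_isRoot_of_forall_im_eq_zero (p := q) (by omega)
    fun z hz => h z (by rw [map_mul, hz, mul_zero])
  obtain ⟨q', rfl⟩ := dvd_iff_isRoot.mpr hs
  exact ⟨r, s, q', by ring⟩

lemma aeval_eq_zero_of_aeval_mul_eq_zero {r s : ℝ} {q : ℝ[X]} {z : ℂ} (hz : z.im ≠ 0)
    (h : aeval z ((X - C r) * (X - C s) * q) = 0) : aeval z q = 0 := by
  have hzr : ∀ t : ℝ, z - t ≠ 0 := fun t h => hz (by rw [sub_eq_zero.mp h, Complex.ofReal_im])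
  simpa [hzr] using h

lemma eq_or_eq_conj_of_mul_dvd {p : ℝ[X]} (hp : p.natDegree = 4) {r s : ℝ}
    (hrs : (X - C r) * (X - C s) ∣ p) {z w : ℂ} (hz : z.im ≠ 0) (hw : w.im ≠ 0)
    (hzp : aeval z p = 0) (hwp : aeval w p = 0) : w = z ∨ w = conj z := by
  by_contra! hwz
  obtain ⟨q, hpq⟩ := hrs
  have hq : q ≠ 0 := by rintro rfl; simp [hpq] at hp
  have hq2 : q.natDegree = 2 := by
    rw [hpq, natDegree_mul (by simp [X_sub_C_ne_zero]) hq, natDegree_mul (X_sub_C_ne_zero r)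
      (X_sub_C_ne_zero s), natDegree_X_sub_C, natDegree_X_sub_C] at hp
    omega
  have hroots : ({z, conj z, w} : Finset ℂ).val ⊆ (q.map (algebraMap ℝ ℂ)).roots := by
    intro v hv
    rw [mem_roots (map_ne_zero hq), IsRoot, eval_map_algebraMap]
    simp only [Finset.insert_val, Finset.singleton_val, Multiset.mem_ndinsert,
      Multiset.mem_singleton] at hv
    rcases hv with rfl | rfl | rfl
    · exact aeval_eq_zero_of_aeval_mul_eq_zero hz (hpq ▸ hzp)
    · rw [aeval_conj, aeval_eq_zero_of_aeval_mul_eq_zero hz (hpq ▸ hzp), map_zero]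
    · exact aeval_eq_zero_of_aeval_mul_eq_zero hw (hpq ▸ hwp)
  have hcard := card_le_degree_of_subset_roots hroots
  have hzz : z ≠ conj z := fun h => hz (Complex.conj_eq_iff_im.mp h.symm)
  rw [natDegree_map, hq2, Finset.card_insert_of_notMem (by simp [hzz, hwz.1.symm]),
    Finset.card_insert_of_notMem (by simpa using fun h => hwz.2 h.symm)] at hcard
  simp at hcard

end Polynomial

lemma LinearMap.charpoly_eq_mul_of_isCompl {K M : Type*} [Field K] [AddCommGroup M] [Module K M]
    [FiniteDimensional K M] {f : Module.End K M} {p q : Submodule K M} (h : IsCompl p q)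
    (hp : ∀ x ∈ p, f x ∈ p) (hq : ∀ x ∈ q, f x ∈ q) :
    f.charpoly = (f.restrict hp).charpoly * (f.restrict hq).charpoly := by
  set e := Submodule.prodEquivOfIsCompl p q h
  have hconj : e.conj ((f.restrict hp).prodMap (f.restrict hq)) = f := by
    ext x
    obtain ⟨⟨y, z⟩, rfl⟩ := e.surjective x
    simp [e, LinearEquiv.conj_apply]
  calc f.charpoly = (e.conj ((f.restrict hp).prodMap (f.restrict hq))).charpoly := by rw [hconj]
    _ = _ := by rw [LinearEquiv.charpoly_conj, LinearMap.charpoly_prodMap]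

lemma Matrix.exists_rotation_of_aeval_charpoly_eq_zero {n : Type*} [Fintype n] [DecidableEq n]
    (A : Matrix n n ℝ) {z : ℂ} (hz : aeval z A.charpoly = 0) :
    ∃ x y : n → ℝ, (x ≠ 0 ∨ y ≠ 0) ∧
      A *ᵥ x = z.re • x - z.im • y ∧ A *ᵥ y = z.im • x + z.re • y := by
  have hroot : Module.End.HasEigenvalue (toLin' (A.map (algebraMap ℝ ℂ))) z := by
    rw [Module.End.hasEigenvalue_iff_isRoot_charpoly, charpoly_toLin', charpoly_map, IsRoot,
      eval_map_algebraMap, hz]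
  obtain ⟨v, hv⟩ := hroot.exists_hasEigenvector
  have hAv : ∀ i, ∑ j, ((A i j : ℂ) * v j) = z * v i := by
    intro i
    simpa [mulVec, dotProduct] using congrFun (Module.End.mem_eigenspace_iff.mp hv.1) i
  refine ⟨fun i => (v i).re, fun i => (v i).im, ?_, ?_, ?_⟩
  · by_contra! h
    exact hv.2 (funext fun i => Complex.ext (congrFun h.1 i) (congrFun h.2 i))
  · funext i
    simpa [mulVec, dotProduct, Complex.ext_iff] using (Complex.ext_iff.mp (hAv i)).1
  · funext i
    simpa [mulVec, dotProduct, Complex.ext_iff, add_comm] using (Complex.ext_iff.mp (hAv i)).2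

lemma Module.End.exists_rotation_of_aeval_charpoly_eq_zero {V : Type*} [AddCommGroup V]
    [Module ℝ V] [FiniteDimensional ℝ V] (f : Module.End ℝ V) {z : ℂ}
    (hz : aeval z f.charpoly = 0) :
    ∃ x y : V, (x ≠ 0 ∨ y ≠ 0) ∧ f x = z.re • x - z.im • y ∧ f y = z.im • x + z.re • y := by
  let b := Module.finBasis ℝ V
  obtain ⟨x, y, hxy, hx, hy⟩ :=
    (LinearMap.toMatrix b b f).exists_rotation_of_aeval_charpoly_eq_zero
      (by rwa [LinearMap.charpoly_toMatrix])
  have hf : ∀ w, f (b.equivFun.symm w) = b.equivFun.symm (LinearMap.toMatrix b b f *ᵥ w) := by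
    intro w
    apply b.equivFun.injective
    rw [LinearEquiv.apply_symm_apply, Basis.equivFun_apply, ← LinearMap.toMatrix_mulVec_repr b b,
      ← Basis.equivFun_apply, LinearEquiv.apply_symm_apply]
  refine ⟨b.equivFun.symm x, b.equivFun.symm y,
    by simpa only [ne_eq, LinearEquiv.map_eq_zero_iff] using hxy, ?_, ?_⟩
  · rw [hf, hx, map_sub, map_smul, map_smul]
  · rw [hf, hy, map_add, map_smul, map_smul]

lemma LinearIndependent.of_rotation {M : Type*} [AddCommGroup M] [Module ℝ M]
    {f : Module.End ℝ M} {x y : M} {α β : ℝ} (hβ : β ≠ 0) (hx : f x = α • x - β • y)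
    (hy : f y = β • x + α • y) (hxy : x ≠ 0 ∨ y ≠ 0) : LinearIndependent ℝ ![x, y] := by
  refine LinearIndependent.pair_iff.mpr fun s t hst => ?_
  have hrot : t • x - s • y = 0 := by
    have h := congrArg f hst
    rw [map_add, map_smul, map_smul, hx, hy, map_zero] at h
    have : β • (t • x - s • y) = 0 := by
      calc β • (t • x - s • y)
          = s • (α • x - β • y) + t • (β • x + α • y) - α • (s • x + t • y) := by module
        _ = 0 := by rw [h, hst, smul_zero, sub_zero]
    exact (smul_eq_zero.mp this).resolve_left hβ
  have hx' : (s ^ 2 + t ^ 2) • x = 0 := by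
    calc (s ^ 2 + t ^ 2) • x = s • (s • x + t • y) + t • (t • x - s • y) := by module
      _ = 0 := by rw [hst, hrot, smul_zero, smul_zero, add_zero]
  have hy' : (s ^ 2 + t ^ 2) • y = 0 := by
    calc (s ^ 2 + t ^ 2) • y = t • (s • x + t • y) - s • (t • x - s • y) := by module
      _ = 0 := by rw [hst, hrot, smul_zero, smul_zero, sub_zero]
  have hsum : s ^ 2 + t ^ 2 = 0 := by
    by_contra hne
    rcases hxy with hx0 | hy0
    · exact hx0 ((smul_eq_zero.mp hx').resolve_left hne)
    · exact hy0 ((smul_eq_zero.mp hy').resolve_left hne)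
  constructor <;> nlinarith [sq_nonneg s, sq_nonneg t]

namespace LinearMap.BilinForm

lemma add_eq_zero_of_isAdjointPair {K M : Type*} [Field K] [AddCommGroup M] [Module K M]
    {B : LinearMap.BilinForm K M} {f : Module.End K M} (hf : IsAdjointPair B B f f)
    {x y : M} {α β : K} (hβ : β ≠ 0) (hx : f x = α • x - β • y) (hy : f y = β • x + α • y) :
    B x x + B y y = 0 := by
  have h := hf x y
  rw [hx, hy] at h
  simp only [map_add, map_sub, map_smul, LinearMap.sub_apply, LinearMap.smul_apply,
    smul_eq_mul] at h
  have : β * (B x x + B y y) = 0 := by linear_combination -h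
  exact (mul_eq_zero.mp this).resolve_left hβ

variable {V : Type*} [AddCommGroup V] [Module ℝ V] {B : LinearMap.BilinForm ℝ V} {e₀ : V}

lemma apply_apply_smul_sub_apply_smul_eq_zero (e₀ x y : V) :
    B e₀ (B e₀ y • x - B e₀ x • y) = 0 := by
  simp only [map_sub, map_smul, smul_eq_mul]
  ring

lemma neg_of_orthogonal_of_pos (hB : B.IsSymm) (hB₀ : ∀ x : V, x ≠ 0 → B e₀ x = 0 → B x x < 0)
    {e x : V} (he : 0 < B e e) (hx : x ≠ 0) (hex : B e x = 0) : B x x < 0 := by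
  by_contra! hxx
  -- `w ∈ span {e, x}` is orthogonal to `e₀`, while `B` is positive semidefinite on `span {e, x}`.
  set w := B e₀ x • e - B e₀ e • x
  have hww : B w w = B e₀ x ^ 2 * B e e + B e₀ e ^ 2 * B x x := by
    simp only [w, map_sub, map_smul, LinearMap.sub_apply, LinearMap.smul_apply, smul_eq_mul,
      hex, hB.eq x e]
    ring
  have hw : w = 0 := by
    by_contra hw
    exact (hB₀ w hw (apply_apply_smul_sub_apply_smul_eq_zero e₀ e x)).not_ge
      (by rw [hww]; positivity)
  have hx₀ : B e₀ x = 0 := by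
    have h := congrArg (B e) hw
    simp only [w, map_sub, map_smul, smul_eq_mul, hex, mul_zero, sub_zero, map_zero] at h
    exact (mul_eq_zero.mp h).resolve_right he.ne'
  have he₀ : B e₀ e = 0 := by
    simpa [w, hx₀, hx] using hw
  exact (hB₀ e (fun h => by simp [h] at he) he₀).not_gt he

lemma not_isotropic_pair (hB : B.IsSymm) (hB₀ : ∀ x : V, x ≠ 0 → B e₀ x = 0 → B x x < 0)
    {x y : V} (hxy : LinearIndependent ℝ ![x, y]) (hxx : B x x = 0) (hyy : B y y = 0) :
    B x y ≠ 0 := by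
  intro hxy'
  set w := B e₀ y • x - B e₀ x • y
  have hw : w = 0 := by
    by_contra hw
    refine (hB₀ w hw (apply_apply_smul_sub_apply_smul_eq_zero e₀ x y)).ne ?_
    simp only [w, map_sub, map_smul, LinearMap.sub_apply, LinearMap.smul_apply, smul_eq_mul,
      hxx, hyy, hxy', hB.eq y x]
    ring
  obtain ⟨-, hx₀⟩ := LinearIndependent.pair_iff.mp hxy (B e₀ y) (-B e₀ x)
    (by rwa [neg_smul, ← sub_eq_add_neg])
  exact (hB₀ x (hxy.ne_zero 0) (neg_eq_zero.mp hx₀)).ne hxx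

lemma exists_pos_mem_span_pair (hB : B.IsSymm) (hB₀ : ∀ x : V, x ≠ 0 → B e₀ x = 0 → B x x < 0)
    {x y : V} (hxy : LinearIndependent ℝ ![x, y]) (hsum : B x x + B y y = 0) :
    ∃ e ∈ Submodule.span ℝ {x, y}, 0 < B e e := by
  rcases lt_or_ge 0 (B x x) with hx | hx
  · exact ⟨x, Submodule.subset_span (by simp), hx⟩
  rcases lt_or_ge 0 (B y y) with hy | hy
  · exact ⟨y, Submodule.subset_span (by simp), hy⟩
  have hxx : B x x = 0 := by linarith
  have hyy : B y y = 0 := by linarith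
  refine ⟨x + B x y • y, Submodule.mem_span_pair.mpr ⟨1, B x y, by simp⟩, ?_⟩
  have hxy' : 0 < B x y ^ 2 := by positivity [not_isotropic_pair hB hB₀ hxy hxx hyy]
  simp only [map_add, map_smul, LinearMap.add_apply, LinearMap.smul_apply, smul_eq_mul, hxx, hyy,
    hB.eq y x]
  linarith

lemma isCompl_orthogonal_of_pos [FiniteDimensional ℝ V] (hB : B.IsSymm)
    (hB₀ : ∀ x : V, x ≠ 0 → B e₀ x = 0 → B x x < 0) {W : Submodule ℝ V} {e : V} (heW : e ∈ W)
    (he : 0 < B e e) : IsCompl W (B.orthogonal W) := by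
  rw [isCompl_orthogonal_iff_disjoint hB.isRefl, Submodule.disjoint_def]
  intro m hmW hm
  by_contra hm₀
  exact (neg_of_orthogonal_of_pos hB hB₀ he hm₀ (hm e heW)).ne (hm m hmW)

variable [FiniteDimensional ℝ V] {f : Module.End ℝ V}

lemma im_eq_zero_of_aeval_charpoly_eq_zero (hB : ∀ x : V, x ≠ 0 → 0 < B x x)
    (hf : IsAdjointPair B B f f) {z : ℂ} (hz : aeval z f.charpoly = 0) : z.im = 0 := by
  by_contra hβ
  obtain ⟨x, y, hxy, hx, hy⟩ := f.exists_rotation_of_aeval_charpoly_eq_zero hz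
  have hsum := add_eq_zero_of_isAdjointPair hf hβ hx hy
  have hB' : ∀ v : V, 0 ≤ B v v := fun v => by
    rcases eq_or_ne v 0 with rfl | hv
    · simp
    · exact (hB v hv).le
  rcases hxy with hx0 | hy0
  · linarith [hB x hx0, hB' y]
  · linarith [hB y hy0, hB' x]

lemma exists_mul_dvd_charpoly_of_rotation (hB : B.IsSymm)
    (hB₀ : ∀ x : V, x ≠ 0 → B e₀ x = 0 → B x x < 0) (hf : IsAdjointPair B B f f)
    (hV : 4 ≤ finrank ℝ V) {x y : V} {α β : ℝ} (hβ : β ≠ 0) (hx : f x = α • x - β • y)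
    (hy : f y = β • x + α • y) (hxy : x ≠ 0 ∨ y ≠ 0) :
    ∃ r s : ℝ, (X - C r) * (X - C s) ∣ f.charpoly := by
  classical
  set W := Submodule.span ℝ ({x, y} : Set V)
  obtain ⟨e, heW, he⟩ := exists_pos_mem_span_pair hB hB₀
    (LinearIndependent.of_rotation hβ hx hy hxy) (add_eq_zero_of_isAdjointPair hf hβ hx hy)
  have hWc : IsCompl W (B.orthogonal W) := isCompl_orthogonal_of_pos hB hB₀ heW he
  have hfW : ∀ v ∈ W, f v ∈ W := by
    intro v hv
    obtain ⟨c, d, rfl⟩ := Submodule.mem_span_pair.mp hv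
    rw [map_add, map_smul, map_smul, hx, hy]
    exact Submodule.mem_span_pair.mpr ⟨c * α + d * β, d * α - c * β, by module⟩
  have hfW' : ∀ v ∈ B.orthogonal W, f v ∈ B.orthogonal W := fun v hv w hw => by
    rw [← hf w v]
    exact hv (f w) (hfW w hw)
  have hdeg : 2 ≤ finrank ℝ (B.orthogonal W) := by
    have hW : finrank ℝ W ≤ 2 :=
      (finrank_span_le_card _).trans (by simpa using Finset.card_le_two)
    have := Submodule.finrank_add_eq_of_isCompl hWc
    omega
  have hneg : ∀ v : B.orthogonal W, v ≠ 0 → 0 < (-B.restrict (B.orthogonal W)) v v := by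
    intro v hv
    have := neg_of_orthogonal_of_pos hB hB₀ he (by simpa using hv) (v.2 e heW)
    simp only [LinearMap.neg_apply, restrict_apply, LinearMap.domRestrict_apply]
    linarith
  have hadj : IsAdjointPair (-B.restrict (B.orthogonal W)) (-B.restrict (B.orthogonal W))
      (f.restrict hfW') (f.restrict hfW') := fun v w => by
    simp [hf v w]
  obtain ⟨r, s, hrs⟩ := Polynomial.exists_mul_dvd_of_forall_im_eq_zero
    (by rwa [LinearMap.charpoly_natDegree]) fun z hz =>
      im_eq_zero_of_aeval_charpoly_eq_zero hneg hadj hz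
  exact ⟨r, s, hrs.trans (Dvd.intro_left _ (charpoly_eq_mul_of_isCompl hWc hfW hfW').symm)⟩

theorem exists_mul_dvd_charpoly_of_isAdjointPair (hB : B.IsSymm)
    (hB₀ : ∀ x : V, x ≠ 0 → B e₀ x = 0 → B x x < 0) (hf : IsAdjointPair B B f f)
    (hV : 4 ≤ finrank ℝ V) : ∃ r s : ℝ, (X - C r) * (X - C s) ∣ f.charpoly := by
  by_cases hreal : ∀ z : ℂ, aeval z f.charpoly = 0 → z.im = 0
  · exact Polynomial.exists_mul_dvd_of_forall_im_eq_zero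
      (by rw [LinearMap.charpoly_natDegree]; omega) hreal
  push Not at hreal
  obtain ⟨z, hz, hzim⟩ := hreal
  obtain ⟨x, y, hxy, hx, hy⟩ := f.exists_rotation_of_aeval_charpoly_eq_zero hz
  exact exists_mul_dvd_charpoly_of_rotation hB hB₀ hf hV hzim hx hy hxy

end LinearMap.BilinForm

lemma exists_forall_toBilin'_neg {G : Matrix (Fin 4) (Fin 4) ℝ}
    (hsig : ∃ P : Matrix (Fin 4) (Fin 4) ℝ, IsUnit P.det ∧
      Pᵀ * G * P = Matrix.diagonal ![1, -1, -1, -1]) :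
    ∃ e₀, ∀ x, x ≠ 0 → toBilin' G e₀ x = 0 → toBilin' G x x < 0 := by
  obtain ⟨P, hP, hPG⟩ := hsig
  have hη : ∀ u v,
      toBilin' G (P *ᵥ u) (P *ᵥ v) = u 0 * v 0 - u 1 * v 1 - u 2 * v 2 - u 3 * v 3 := by
    intro u v
    rw [← toLin'_apply, ← toLin'_apply, ← LinearMap.BilinForm.comp_apply, toBilin'_comp, hPG,
      toBilin'_apply']
    simp only [dotProduct, mulVec_diagonal, Fin.sum_univ_four, cons_val_zero, cons_val_one,
      cons_val]
    ring
  refine ⟨P *ᵥ Pi.single 0 1, fun x hx hx₀ => ?_⟩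
  obtain ⟨y, rfl⟩ : ∃ y, x = P *ᵥ y :=
    ⟨P⁻¹ *ᵥ x, by rw [mulVec_mulVec, mul_nonsing_inv _ hP, one_mulVec]⟩
  have hy : y ≠ 0 := fun h => hx (by rw [h, mulVec_zero])
  have hy₀ : y 0 = 0 := by
    rw [hη] at hx₀
    simpa using hx₀
  rw [hη, hy₀]
  by_contra! hle
  refine hy (funext fun i => ?_)
  fin_cases i <;> simp only [Fin.zero_eta, Fin.mk_one, Fin.reduceFinMk, Fin.isValue, Pi.zero_apply,
    hy₀] <;> nlinarith [sq_nonneg (y 1), sq_nonneg (y 2), sq_nonneg (y 3)]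

theorem stmt5 (G M : Matrix (Fin 4) (Fin 4) ℝ)
    (hGsymm : Gᵀ = G)
    (hsig : ∃ P : Matrix (Fin 4) (Fin 4) ℝ, IsUnit P.det ∧
      Pᵀ * G * P = Matrix.diagonal ![1, -1, -1, -1])
    (hsa : ∀ x y : Fin 4 → ℝ,
      (M.mulVec x) ⬝ᵥ (G.mulVec y) = x ⬝ᵥ (G.mulVec (M.mulVec y))) :
    (¬ ∃ z w : ℂ, z.im ≠ 0 ∧ w.im ≠ 0 ∧ w ≠ z ∧ w ≠ star z ∧
        ((M.map (fun r : ℝ => (r : ℂ))).charpoly).IsRoot z ∧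
        ((M.map (fun r : ℝ => (r : ℂ))).charpoly).IsRoot w) ∧
      ∃ r s : ℝ, (X - C r) * (X - C s) ∣ M.charpoly := by
  obtain ⟨e₀, he₀⟩ := exists_forall_toBilin'_neg hsig
  have hf : LinearMap.IsAdjointPair (toBilin' G) (toBilin' G) (toLin' M) (toLin' M) :=
    fun x y => by simpa only [toBilin'_apply', toLin'_apply] using hsa x y
  obtain ⟨r, s, hrs⟩ := (toBilin' G).exists_mul_dvd_charpoly_of_isAdjointPair
    (isSymm_toBilin'_iff_isSymm.mpr hGsymm) he₀ hf (by simp)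
  rw [charpoly_toLin'] at hrs
  have haeval : ∀ z,
      ((M.map (fun r : ℝ => (r : ℂ))).charpoly).IsRoot z → aeval z M.charpoly = 0 := fun z hz => by
    rwa [← Complex.coe_algebraMap, charpoly_map, IsRoot, eval_map_algebraMap] at hz
  refine ⟨?_, r, s, hrs⟩
  rintro ⟨z, w, hz, hw, hwz, hwz', hzM, hwM⟩
  rcases Polynomial.eq_or_eq_conj_of_mul_dvd (charpoly_natDegree_eq_dim M) hrs hz hw
    (haeval z hzM) (haeval w hwM) with h | h
  exacts [hwz h, hwz' h]
end

section
/- With the same setup but λ₇ = 0 (so K = λ₀(θ̃¹⊗θ̃¹ + qθ̃²⊗θ̃²) + λ₁(θ̃¹⊗θ̃² + θ̃²⊗θ̃¹) + λ₂(θ̃³⊗θ̃⁴ + θ̃⁴⊗θ̃³), λ₀ ≠ 0, λ₁+λ₂ ≠ 0): invariance of K under the null rotation with parameters t = a+ib, p forces p = 0 and a = 0, while b remains free (the twist e^{ib} is an invariance of K). -/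
open Matrix

/-- The null rotation (with boost parameter `a`, twist parameter `b`, and null-rotation
parameter `p`) acting on the coframe `θ̃ⁱ = A i j • θʲ`. -/
noncomputable def nullRot (a b : ℝ) (p : ℂ) : Matrix (Fin 4) (Fin 4) ℂ :=
  !![Complex.exp (-(a : ℂ)), Complex.exp (-(a : ℂ)) * (p * star p),
       Complex.exp (-(a : ℂ)) * star p, Complex.exp (-(a : ℂ)) * p;
     0, Complex.exp (a : ℂ), 0, 0;
     0, Complex.exp (-(Complex.I * (b : ℂ))) * p, Complex.exp (-(Complex.I * (b : ℂ))), 0;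
     0, Complex.exp (Complex.I * (b : ℂ)) * star p, 0, Complex.exp (Complex.I * (b : ℂ))]

/-- Covariant components of the Killing tensor with `l₇ = 0`:
`K = l₀(θ¹⊗θ¹ + q θ²⊗θ²) + l₁(θ¹⊗θ² + θ²⊗θ¹) + l₂(θ³⊗θ⁴ + θ⁴⊗θ³)`. -/
def killingMat (q l₀ l₁ l₂ : ℝ) : Matrix (Fin 4) (Fin 4) ℂ :=
  !![(l₀ : ℂ), (l₁ : ℂ), 0, 0;
     (l₁ : ℂ), (q : ℂ) * (l₀ : ℂ), 0, 0;
     0, 0, 0, (l₂ : ℂ);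
     0, 0, (l₂ : ℂ), 0]

theorem stmt10 (q l₀ l₁ l₂ : ℝ) (hq : q = 1 ∨ q = -1)
    (h0 : l₀ ≠ 0) (h12 : l₁ + l₂ ≠ 0) :
    (∀ (a b : ℝ) (p : ℂ),
      (nullRot a b p)ᵀ * killingMat q l₀ l₁ l₂ * nullRot a b p = killingMat q l₀ l₁ l₂ →
        p = 0 ∧ a = 0) ∧
    (∀ b : ℝ,
      (nullRot 0 b 0)ᵀ * killingMat q l₀ l₁ l₂ * nullRot 0 b 0 = killingMat q l₀ l₁ l₂) := by
  constructor
  · intro a b p h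
    have h02 := congrFun (congrFun h 0) 2
    have h00 := congrFun (congrFun h 0) 0
    simp [nullRot, killingMat, Matrix.mul_apply, Fin.sum_univ_four,
      Matrix.transpose_apply, Matrix.vecHead, Matrix.vecTail] at h02 h00
    have hp : p = 0 := h02.resolve_left h0
    refine ⟨hp, ?_⟩
    have hr : Real.exp (-a) * l₀ * Real.exp (-a) = l₀ := by
      have : -(a : ℂ) = ((-a : ℝ) : ℂ) := by push_cast; ring
      rw [this, ← Complex.ofReal_exp] at h00
      exact_mod_cast h00
    have h2 : Real.exp (-a) * Real.exp (-a) = 1 := by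
      have hh : (Real.exp (-a) * Real.exp (-a)) * l₀ = 1 * l₀ := by linear_combination hr
      exact mul_right_cancel₀ h0 hh
    rw [← Real.exp_add] at h2
    rw [Real.exp_eq_one_iff] at h2
    linarith
  · intro b
    ext i j
    fin_cases i <;> fin_cases j <;>
      simp [nullRot, killingMat, Matrix.mul_apply, Fin.sum_univ_four,
        Matrix.transpose_apply, Matrix.vecHead, Matrix.vecTail, ← Complex.exp_add] <;>
      rw [mul_right_comm, ← Complex.exp_add] <;> norm_num
end
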